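/- For every n ≥ 1 and every odd m ≥ 3, there exists a random forest F consisting of m decision trees on variables x_1,…,x_n such that: F(x) = 1 for every x ∈ {0,1}^n; the empty term is the unique sufficient reason for every instance x given F; and for every instance x, the complete term t_x (of size n) is the unique majoritary reason for x given F. Consequently, every majoritary reason contains n more features than the sufficient reason. Such an F is obtained by taking ⌊m/2⌋ decision trees computing the parity function x_1 ⊕ … ⊕ x_n, ⌊m/2⌋ decision trees computing its negation, and one decision tree reduced to a 1-leaf. -/

import Mathlib

/-- A Boolean decision tree on variables `x_1, …, x_n`. -/
inductive DTree (n : ℕ) : Type where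
  | leaf : Bool → DTree n
  | node : Fin n → DTree n → DTree n → DTree n

namespace DTree

/-- Evaluation of a decision tree on an instance `x ∈ {0,1}^n`. -/
def eval {n : ℕ} : DTree n → (Fin n → Bool) → Bool
  | leaf b, _ => b
  | node i l r, x => if x i = true then r.eval x else l.eval x

/-- The tree obtained by flipping every leaf label. -/
def neg {n : ℕ} : DTree n → DTree n
  | leaf b => leaf (!b)
  | node i l r => node i l.neg r.neg

/-- Auxiliary predicate: no variable from `s` is queried, and no variable is
queried twice along any root-to-leaf path. -/
def readOnceAux {n : ℕ} : DTree n → Finset (Fin n) → Prop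
  | leaf _, _ => True
  | node i l r, s => i ∉ s ∧ l.readOnceAux (insert i s) ∧ r.readOnceAux (insert i s)

/-- Every variable occurs at most once on any root-to-leaf path. -/
def readOnce {n : ℕ} (T : DTree n) : Prop := T.readOnceAux ∅

/-- The list of terms of the root-to-leaf paths of `T` ending in a leaf labeled `b`;
a literal is a pair `(i, c)` meaning `x_i` if `c = true` and `¬ x_i` if `c = false`. -/
def paths {n : ℕ} (b : Bool) : DTree n → List (Finset (Fin n × Bool))
  | leaf c => if c = b then [∅] else []
  | node i l r => (l.paths b).map (insert (i, false)) ++ (r.paths b).map (insert (i, true))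

/-- The term of the unique root-to-leaf path of `T` that covers the instance `x`. -/
def pathTerm {n : ℕ} : DTree n → (Fin n → Bool) → Finset (Fin n × Bool)
  | leaf _, _ => ∅
  | node i l r, x =>
      if x i = true then insert (i, true) (r.pathTerm x) else insert (i, false) (l.pathTerm x)

end DTree

/-- A term (set of literals) covers an instance `x` if every literal of it is satisfied by `x`. -/
def covers {n : ℕ} (t : Finset (Fin n × Bool)) (x : Fin n → Bool) : Prop :=
  ∀ l ∈ t, x l.1 = l.2

/-- A term is consistent if it contains no pair of opposite literals. -/
def consistentTerm {n : ℕ} (t : Finset (Fin n × Bool)) : Prop :=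
  ∀ i : Fin n, ¬ ((i, true) ∈ t ∧ (i, false) ∈ t)

/-- `t` is an implicant of the Boolean function `f`. -/
def implicant {n : ℕ} (t : Finset (Fin n × Bool)) (f : (Fin n → Bool) → Bool) : Prop :=
  ∀ z : Fin n → Bool, covers t z → f z = true

/-- The complete term `t_x` of an instance `x`. -/
def termOf {n : ℕ} (x : Fin n → Bool) : Finset (Fin n × Bool) :=
  Finset.univ.image (fun i => (i, x i))

/-- Majority vote of a random forest `F = {T_1, …, T_m}`: output `1` iff strictly more than
`m / 2` of the trees output `1`. -/
def forestEval {n m : ℕ} (T : Fin m → DTree n) (x : Fin n → Bool) : Bool :=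
  decide (m < 2 * (Finset.univ.filter (fun i => (T i).eval x = true)).card)

/-- `t` is an implicant of at least `⌊m/2⌋ + 1` of the trees of the forest. -/
def majImp {n m : ℕ} (T : Fin m → DTree n) (t : Finset (Fin n × Bool)) : Prop :=
  m / 2 + 1 ≤ {i : Fin m | implicant t ((T i).eval)}.ncard

/-- A majoritary reason for `x` given the forest `T` (case `F(x) = 1`). -/
def majReason {n m : ℕ} (T : Fin m → DTree n) (x : Fin n → Bool)
    (t : Finset (Fin n × Bool)) : Prop :=
  covers t x ∧ majImp T t ∧ ∀ l ∈ t, ¬ majImp T (t.erase l)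

/-- A sufficient reason for `x` given the forest `T`: a prime implicant of the forest
covering `x` (case `F(x) = 1`). -/
def suffReason {n m : ℕ} (T : Fin m → DTree n) (x : Fin n → Bool)
    (t : Finset (Fin n × Bool)) : Prop :=
  covers t x ∧ implicant t (forestEval T) ∧ ∀ s ⊂ t, ¬ implicant s (forestEval T)

/-- The direct reason for `x` given the forest `T` (case `F(x) = 1`): the union of the
path terms of `x` in the trees that classify `x` positively. -/
def directReason {n m : ℕ} (T : Fin m → DTree n) (x : Fin n → Bool) :
    Finset (Fin n × Bool) :=
  (Finset.univ.filter (fun i => (T i).eval x = true)).sup (fun i => (T i).pathTerm x)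

/-- The parity function `x_1 ⊕ … ⊕ x_n`. -/
def parity (n : ℕ) (x : Fin n → Bool) : Bool :=
  decide (Odd (Finset.univ.filter (fun i => x i = true)).card)


/-!
Trees computing parity and its negation disagree on every instance, so exactly `⌊m/2⌋ + 1` trees
vote 1 everywhere: the forest is constant, and its only prime implicant is the empty term.
Flipping any variable flips parity, so a term leaving some variable free is an implicant of no
(negated) parity tree, only of the 1-leaf, which is no majority once `m ≥ 2`. The complete term
`t_x`, on the other hand, is an implicant of exactly the trees voting 1 on `x`.
-/

open Finset

namespace DTree

def parityOn {n : ℕ} : List (Fin n) → Bool → DTree n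
  | [], b => leaf b
  | i :: l, b => node i (parityOn l b) (parityOn l (!b))

theorem eval_parityOn {n : ℕ} (l : List (Fin n)) (b : Bool) (x : Fin n → Bool) :
    (parityOn l b).eval x = xor b (decide (Odd (l.countP (x ·)))) := by
  induction l generalizing b with
  | nil => simp [parityOn, eval]
  | cons i l ih =>
    cases hi : x i <;> simp [parityOn, eval, ih, hi, Nat.odd_add_one, -Nat.not_odd_iff_even]

theorem readOnceAux_parityOn {n : ℕ} {l : List (Fin n)} (hl : l.Nodup) (b : Bool)
    {s : Finset (Fin n)} (hs : ∀ i ∈ l, i ∉ s) : (parityOn l b).readOnceAux s := by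
  induction l generalizing b s with
  | nil => trivial
  | cons i l ih =>
    obtain ⟨hi, hl⟩ := List.nodup_cons.mp hl
    have hs' : ∀ j ∈ l, j ∉ insert i s := fun j hj => by
      simp only [mem_insert, not_or]
      exact ⟨fun h => hi (h ▸ hj), hs j (List.mem_cons_of_mem i hj)⟩
    exact ⟨hs i List.mem_cons_self, ih hl _ hs', ih hl _ hs'⟩

end DTree

theorem parity_eq_countP_finRange {n : ℕ} (x : Fin n → Bool) :
    parity n x = decide (Odd ((List.finRange n).countP (x ·))) := by
  rw [parity, List.countP_eq_length_filter,
    ← List.toFinset_card_of_nodup ((List.nodup_finRange n).filter _)]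
  congr 3
  ext i
  simp

theorem DTree.eval_parityOn_finRange {n : ℕ} (b : Bool) (x : Fin n → Bool) :
    (parityOn (List.finRange n) b).eval x = xor b (parity n x) := by
  rw [eval_parityOn, parity_eq_countP_finRange]

theorem DTree.readOnce_parityOn_finRange {n : ℕ} (b : Bool) :
    (parityOn (List.finRange n) b).readOnce :=
  readOnceAux_parityOn (List.nodup_finRange n) b (by simp)

theorem parity_update_not {n : ℕ} (x : Fin n → Bool) (j : Fin n) :
    parity n (Function.update x j (!x j)) = !parity n x := by
  set S := univ.filter (fun i => x i = true)
  have hflip : Odd (#(univ.filter fun i => Function.update x j (!x j) i = true) + #S) := by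
    by_cases hj : x j = true
    · have hjS : j ∈ S := by simp [S, hj]
      have hS : univ.filter (fun i => Function.update x j (!x j) i = true) = S.erase j := by
        ext i; by_cases hij : i = j <;> simp [S, hij, hj, Function.update_of_ne]
      rw [hS, card_erase_of_mem hjS]
      have := card_pos.mpr ⟨j, hjS⟩
      exact Nat.odd_iff.mpr (by omega)
    · have hjS : j ∉ S := by simp [S, hj]
      have hS : univ.filter (fun i => Function.update x j (!x j) i = true) = insert j S := by
        ext i; by_cases hij : i = j <;> simp [S, hij, hj, Function.update_of_ne]
      rw [hS, card_insert_of_notMem hjS]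
      exact Nat.odd_iff.mpr (by omega)
  rw [Nat.odd_add, ← Nat.not_odd_iff_even] at hflip
  simp [parity, S, hflip, -Nat.not_odd_iff_even]

section Terms

variable {n : ℕ}

theorem mem_termOf {x : Fin n → Bool} {i : Fin n} {c : Bool} : (i, c) ∈ termOf x ↔ x i = c := by
  simp [termOf, eq_comm]

theorem covers_iff_subset_termOf {t : Finset (Fin n × Bool)} {x : Fin n → Bool} :
    covers t x ↔ t ⊆ termOf x :=
  ⟨fun h _ hl => mem_termOf.mpr (h _ hl), fun h ⟨_, _⟩ hl => mem_termOf.mp (h hl)⟩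

theorem card_termOf (x : Fin n → Bool) : #(termOf x) = n := by
  rw [termOf, card_image_of_injective _ fun _ _ h => congrArg Prod.fst h, card_univ,
    Fintype.card_fin]

theorem implicant_termOf_iff {x : Fin n → Bool} {f : (Fin n → Bool) → Bool} :
    implicant (termOf x) f ↔ f x = true := by
  have hcov : ∀ z, covers (termOf x) z ↔ z = x := fun z => by
    rw [covers_iff_subset_termOf]
    refine ⟨fun h => funext fun i => mem_termOf.mp (h (mem_termOf.mpr (rfl : x i = x i))), ?_⟩
    rintro rfl
    rfl
  simp [implicant, hcov]

theorem covers_update_not {t : Finset (Fin n × Bool)} {x : Fin n → Bool} {j : Fin n}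
    (ht : t ⊆ termOf x) (hj : (j, x j) ∉ t) : covers t (Function.update x j (!x j)) := by
  rintro ⟨i, c⟩ hl
  have hi : i ≠ j := by
    rintro rfl
    exact hj (mem_termOf.mp (ht hl) ▸ hl)
  simpa [Function.update_of_ne hi] using mem_termOf.mp (ht hl)

end Terms

section Reasons

variable {n m : ℕ} {T : Fin m → DTree n} {x : Fin n → Bool} {t : Finset (Fin n × Bool)}

theorem majImp_termOf_iff : majImp T (termOf x) ↔ forestEval T x = true := by
  have : {i : Fin m | implicant (termOf x) (T i).eval} = ↑(univ.filter fun i => (T i).eval x) := by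
    ext i
    simp [implicant_termOf_iff]
  rw [majImp, forestEval, this, Set.ncard_coe_finset, decide_eq_true_iff]
  omega

theorem suffReason_iff_eq_empty (hT : ∀ z, forestEval T z = true) :
    suffReason T x t ↔ t = ∅ := by
  refine ⟨fun ⟨_, _, hmin⟩ => ?_, ?_⟩
  · by_contra hne
    exact hmin ∅ (empty_ssubset.mpr (nonempty_iff_ne_empty.mpr hne)) fun z _ => hT z
  · rintro rfl
    exact ⟨fun _ h => absurd h (notMem_empty _), fun z _ => hT z,
      fun s hs => absurd hs (not_ssubset_empty s)⟩

theorem majReason_iff_eq_termOf (hx : majImp T (termOf x))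
    (hsub : ∀ s ⊂ termOf x, ¬ majImp T s) : majReason T x t ↔ t = termOf x := by
  refine ⟨fun ⟨hcov, hmaj, _⟩ => ?_, ?_⟩
  · by_contra hne
    exact hsub t (ssubset_of_subset_of_ne (covers_iff_subset_termOf.mp hcov) hne) hmaj
  · rintro rfl
    exact ⟨covers_iff_subset_termOf.mpr subset_rfl, hx,
      fun l hl => hsub _ (erase_ssubset hl)⟩

end Reasons

section ParityForest

variable {n m : ℕ}

def parityForest (n m : ℕ) : Fin m → DTree n := fun i =>
  if (i : ℕ) < m / 2 then .parityOn (List.finRange n) false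
  else if (i : ℕ) < 2 * (m / 2) then .parityOn (List.finRange n) true
  else .leaf true

theorem readOnce_parityForest (i : Fin m) : (parityForest n m i).readOnce := by
  unfold parityForest
  split_ifs
  · exact DTree.readOnce_parityOn_finRange false
  · exact DTree.readOnce_parityOn_finRange true
  · trivial

theorem eval_parityForest (i : Fin m) (x : Fin n → Bool) :
    (parityForest n m i).eval x =
      if (i : ℕ) < m / 2 then parity n x else if (i : ℕ) < 2 * (m / 2) then !parity n x
      else true := by
  unfold parityForest
  split_ifs <;> simp [DTree.eval_parityOn_finRange, DTree.eval]

theorem eval_parityForest_update_not {i : Fin m} (hi : (i : ℕ) < 2 * (m / 2))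
    (x : Fin n → Bool) (j : Fin n) :
    (parityForest n m i).eval (Function.update x j (!x j)) = !(parityForest n m i).eval x := by
  simp only [eval_parityForest, parity_update_not, hi, if_true]
  split_ifs <;> rfl

theorem Fin.card_filter_val (p : ℕ → Prop) [DecidablePred p] :
    #{i : Fin m | p i} = #{a ∈ range m | p a} := by
  rw [← Nat.Iio_eq_range, ← Fin.map_valEmbedding_univ, filter_map, card_map]
  rfl

theorem forestEval_parityForest (hodd : Odd m) (x : Fin n → Bool) :
    forestEval (parityForest n m) x = true := by
  have hm := Nat.odd_iff.mp hodd
  -- the votes for 1 are those of the 1-leaf and of either all parity or all negated parity trees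
  have hvotes : ∀ b : Bool, #{a ∈ range m |
      (if a < m / 2 then b else if a < 2 * (m / 2) then !b else true) = true} = m / 2 + 1 := by
    rintro (_ | _)
    · rw [show {a ∈ range m | _} = Ico (m / 2) m by ext a; simp; omega]
      simp only [Nat.card_Ico]
      omega
    · rw [show {a ∈ range m | _} = insert (2 * (m / 2)) (range (m / 2)) by
        ext a; simp; omega]
      rw [card_insert_of_notMem (by simp; omega), card_range]
  simp only [forestEval, eval_parityForest, Fin.card_filter_val
    (fun a => (if a < m / 2 then parity n x else if a < 2 * (m / 2) then !parity n x
      else true) = true), hvotes, decide_eq_true_iff]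
  omega

theorem not_majImp_parityForest_of_ssubset (hm : 2 ≤ m) {x : Fin n → Bool}
    {s : Finset (Fin n × Bool)} (hs : s ⊂ termOf x) : ¬ majImp (parityForest n m) s := by
  obtain ⟨⟨j, c⟩, hjc, hj⟩ := exists_of_ssubset hs
  obtain rfl : x j = c := mem_termOf.mp hjc
  have hx : covers s x := covers_iff_subset_termOf.mpr hs.subset
  have hy := covers_update_not hs.subset hj
  -- `s` covers `x` and `x` with `x_j` flipped, on which every (negated) parity tree changes value
  have hleaf : ∀ i ∈ {i : Fin m | implicant s (parityForest n m i).eval},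
      (i : ℕ) = 2 * (m / 2) := by
    intro i hi
    by_contra hne
    have hlt : (i : ℕ) < 2 * (m / 2) := by omega
    have := hi _ hy
    rw [eval_parityForest_update_not hlt, hi x hx] at this
    exact Bool.false_ne_true this
  have := Set.ncard_le_one_iff_subsingleton.mpr fun i hi i' hi' =>
    Fin.ext ((hleaf i hi).trans (hleaf i' hi').symm)
  unfold majImp
  omega

end ParityForest

theorem majoritary_vs_sufficient_gap_general (n m : ℕ) (hm : 3 ≤ m) (hodd : Odd m) :
    ∃ T : Fin m → DTree n,
      (∀ i, (T i).readOnce) ∧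
      (∀ i : Fin m, (i : ℕ) < m / 2 → ∀ x, (T i).eval x = parity n x) ∧
      (∀ i : Fin m, m / 2 ≤ (i : ℕ) → (i : ℕ) < 2 * (m / 2) →
        ∀ x, (T i).eval x = !(parity n x)) ∧
      (∀ i : Fin m, (i : ℕ) = 2 * (m / 2) → T i = DTree.leaf true) ∧
      (∀ x : Fin n → Bool, forestEval T x = true) ∧
      (∀ (x : Fin n → Bool) (t : Finset (Fin n × Bool)), suffReason T x t ↔ t = ∅) ∧
      (∀ (x : Fin n → Bool) (t : Finset (Fin n × Bool)), majReason T x t ↔ t = termOf x) ∧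
      (∀ (x : Fin n → Bool) (t s : Finset (Fin n × Bool)),
        majReason T x t → suffReason T x s → t.card = s.card + n) := by
  have hvalid := forestEval_parityForest (n := n) hodd
  have hsuff x t := suffReason_iff_eq_empty (x := x) (t := t) hvalid
  have hmaj x t := majReason_iff_eq_termOf (x := x) (t := t) (majImp_termOf_iff.mpr (hvalid x))
    fun _ hs => not_majImp_parityForest_of_ssubset (by omega) hs
  refine ⟨parityForest n m, readOnce_parityForest, fun i hi x => ?_, fun i hi hi' x => ?_,
    fun i hi => ?_, hvalid, hsuff, hmaj, fun x t s ht hs => ?_⟩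
  · simp [eval_parityForest, hi]
  · simp [eval_parityForest, hi', not_lt.mpr hi]
  · have : m / 2 ≤ 2 * (m / 2) := by omega
    simp [parityForest, hi, this]
  · rw [(hmaj x t).mp ht, (hsuff x s).mp hs, card_termOf, card_empty, zero_add]

/-- for every `n ≥ 1` and odd `m ≥ 3` there is a random forest of `m` trees —
`⌊m/2⌋` trees computing the parity function, `⌊m/2⌋` trees computing its negation, and one
tree reduced to a 1-leaf — that is valid, whose unique sufficient reason for any instance is
the empty term, and whose unique majoritary reason for any instance `x` is the complete term
`t_x`; consequently every majoritary reason has `n` more features than the sufficient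
reason. -/
theorem majoritary_vs_sufficient_gap (n m : ℕ) (hn : 1 ≤ n) (hm : 3 ≤ m) (hodd : Odd m) :
    ∃ T : Fin m → DTree n,
      (∀ i, (T i).readOnce) ∧
      (∀ i : Fin m, (i : ℕ) < m / 2 → ∀ x, (T i).eval x = parity n x) ∧
      (∀ i : Fin m, m / 2 ≤ (i : ℕ) → (i : ℕ) < 2 * (m / 2) →
        ∀ x, (T i).eval x = !(parity n x)) ∧
      (∀ i : Fin m, (i : ℕ) = 2 * (m / 2) → T i = DTree.leaf true) ∧
      (∀ x : Fin n → Bool, forestEval T x = true) ∧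
      (∀ (x : Fin n → Bool) (t : Finset (Fin n × Bool)), suffReason T x t ↔ t = ∅) ∧
      (∀ (x : Fin n → Bool) (t : Finset (Fin n × Bool)), majReason T x t ↔ t = termOf x) ∧
      (∀ (x : Fin n → Bool) (t s : Finset (Fin n × Bool)),
        majReason T x t → suffReason T x s → t.card = s.card + n) :=
  majoritary_vs_sufficient_gap_general n m hm hodd
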